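/- Let k ≥ 1, let q₁, …, q_{k+1} be unit imaginary quaternions with q_i ≠ ±q_j for i ≠ j, and let U_k ⊆ ℍ^{k+1} be the real span of the standard basis vectors ε₁, …, ε_{k+1} together with e_j = q_j·ε_j + q_{j+1}·ε_{j+1}, j = 1, …, k. Then for every unit imaginary quaternion p, U_k^⊥ + p•(U_k^⊥) = ℍ^{k+1}, where U_k^⊥ = {y ∈ ℍ^{k+1} : Re(Σ x_i·conj(y_i)) = 0 for all x ∈ U_k}; that is, the dual of the pair (U_k, ℍ^{k+1}) is given by a CR quaternionic vector space. -/

import Mathlib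

/-!
A vector of `U_k^⊥` supported on the single coordinate `i` is exactly `ε_i v` with `v` in the
plane `W_i = span{1, q_i}^⊥ ⊆ ℍ`. When `p ≠ ±q_i`, the vectors `r = p - ⟨q_i, p⟩ q_i` and
`s = p q_i + ⟨q_i, p⟩` lie in `W_i`, and `p r`, `p s` recover `1` and `q_i` up to the nonzero factor
`⟨q_i, p⟩² - 1`; so `W_i + p W_i = ℍ` and the whole `i`-th coordinate line lies in
`U_k^⊥ + p•U_k^⊥`. Since the `q_i` are pairwise distinct up to sign, `p = ±q_i` for at most one
`i`. That coordinate is reached through the alternating vector `w = ((-1)^i q_i)_i ∈ U_k^⊥`: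
subtracting the other coordinates of `w` and `p w` leaves `ε_i q_i` and `ε_i (p q_i) = ∓ε_i`.
-/

open Quaternion

/-- Componentwise left multiplication by a quaternion `p` on `ℍ^n`, as a real-linear map. -/
noncomputable def mulLeftLM (n : ℕ) (p : Quaternion ℝ) :
    (Fin n → Quaternion ℝ) →ₗ[ℝ] (Fin n → Quaternion ℝ) :=
  LinearMap.pi fun i => (LinearMap.mulLeft ℝ p).comp (LinearMap.proj i)

/-- The orthogonal complement `U^⊥` of a real subspace `U ⊆ ℍ^n` with respect to the real
inner product `(x, y) ↦ Re (Σ_i x_i · conj (y_i))`. -/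
noncomputable def orthQ (n : ℕ) (U : Submodule ℝ (Fin n → Quaternion ℝ)) :
    Submodule ℝ (Fin n → Quaternion ℝ) where
  carrier := {y | ∀ x ∈ U, ∑ i, (x i * star (y i)).re = 0}
  add_mem' := by
    intro a b ha hb x hx
    have h1 := ha x hx
    have h2 := hb x hx
    simp only [Pi.add_apply, star_add, mul_add, Quaternion.re_add, Finset.sum_add_distrib]
    linarith
  zero_mem' := by
    intro x hx
    simp
  smul_mem' := by
    intro r y hy x hx
    have h1 := hy x hx
    simp only [Pi.smul_apply, Quaternion.star_smul, mul_smul_comm, Quaternion.re_smul,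
      smul_eq_mul, ← Finset.mul_sum, h1, mul_zero]

/-- The model subspace `U_k ⊆ ℍ^{k+1}`: the real span of the standard basis vectors
`ε₁, …, ε_{k+1}` together with the vectors `e_j = q_j·ε_j + q_{j+1}·ε_{j+1}`,
`j = 1, …, k`. -/
noncomputable def UkSub (k : ℕ) (q : Fin (k + 1) → Quaternion ℝ) :
    Submodule ℝ (Fin (k + 1) → Quaternion ℝ) :=
  Submodule.span ℝ
    ((Set.range fun i : Fin (k + 1) => Pi.single i (1 : Quaternion ℝ)) ∪
     (Set.range fun j : Fin k =>
        Pi.single j.castSucc (q j.castSucc) + Pi.single j.succ (q j.succ)))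

theorem Quaternion.re_eq_zero_and_norm_eq_one_of_sq_eq_neg_one {p : ℍ[ℝ]} (hp : p ^ 2 = -1) :
    p.re = 0 ∧ ‖p‖ = 1 := by
  have hn : normSq p = 1 := by
    have h := congrArg normSq hp
    rw [map_pow, normSq_neg, map_one] at h
    exact (pow_eq_one_iff_of_nonneg normSq_nonneg two_ne_zero).mp h
  refine ⟨sq_eq_neg_normSq.mp (by rw [hp, hn]; simp), ?_⟩
  rw [normSq_eq_norm_mul_self] at hn
  nlinarith [norm_nonneg p]

theorem Quaternion.mem_orthogonal_span_one_pair_iff {q v : ℍ[ℝ]} :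
    v ∈ (Submodule.span ℝ {1, q})ᗮ ↔ v.re = 0 ∧ inner ℝ q v = 0 := by
  rw [Submodule.span_insert, ← Submodule.inf_orthogonal, Submodule.mem_inf,
    Submodule.mem_orthogonal_singleton_iff_inner_right,
    Submodule.mem_orthogonal_singleton_iff_inner_right, inner_def]
  simp

theorem Quaternion.eq_top_of_orthogonal_span_one_pair_le {q : ℍ[ℝ]} {T : Submodule ℝ ℍ[ℝ]}
    (hT : (Submodule.span ℝ {1, q})ᗮ ≤ T) (h1 : 1 ∈ T) (hq : q ∈ T) : T = ⊤ := by
  have hK : Submodule.span ℝ {1, q} ≤ T := Submodule.span_le.mpr (Set.pair_subset h1 hq)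
  rw [eq_top_iff,
    ← Submodule.sup_orthogonal_of_hasOrthogonalProjection (K := Submodule.span ℝ {1, q})]
  exact sup_le hK hT

theorem Quaternion.orthogonal_span_one_pair_sup_map_mulLeft_eq_top {p q : ℍ[ℝ]} (hp : p ^ 2 = -1)
    (hq : q ^ 2 = -1) (hpq : p ≠ q) (hpq' : p ≠ -q) :
    (Submodule.span ℝ {1, q})ᗮ ⊔ (Submodule.span ℝ {1, q})ᗮ.map (LinearMap.mulLeft ℝ p) = ⊤ := by
  obtain ⟨hpre, hpn⟩ := re_eq_zero_and_norm_eq_one_of_sq_eq_neg_one hp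
  obtain ⟨hqre, hqn⟩ := re_eq_zero_and_norm_eq_one_of_sq_eq_neg_one hq
  have hpp : p * p = -1 := by rw [← sq, hp]
  set K := Submodule.span ℝ {1, q}
  set T := Kᗮ ⊔ Kᗮ.map (LinearMap.mulLeft ℝ p)
  set α : ℝ := inner ℝ q p
  have hα : α ^ 2 - 1 ≠ 0 := by
    rw [sub_ne_zero, Ne, sq_eq_one_iff, inner_eq_one_iff_of_norm_eq_one hqn hpn,
      inner_eq_neg_one_iff_of_norm_eq_one hqn hpn]
    rintro (h | h)
    · exact hpq h.symm
    · exact hpq' (by rw [h, neg_neg])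
  set r := p - α • q
  set s := p * q + α • (1 : ℍ[ℝ])
  have hr : r ∈ Kᗮ := by
    rw [mem_orthogonal_span_one_pair_iff]
    refine ⟨by simp [r, hpre, hqre], ?_⟩
    rw [inner_sub_right, real_inner_smul_right, real_inner_self_eq_norm_sq, hqn]
    ring
  have hs : s ∈ Kᗮ := by
    rw [mem_orthogonal_span_one_pair_iff]
    simp only [s, α, inner_def, re_mul, re_add, imI_add, imJ_add, imK_add, re_smul, imI_smul,
      imJ_smul, imK_smul, re_star, imI_star, imJ_star, imK_star, imI_mul, imJ_mul, imK_mul,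
      hpre, hqre, re_one, imI_one, imJ_one, imK_one, smul_eq_mul]
    constructor <;> ring
  have hmem : ∀ v ∈ Kᗮ, v ∈ T ∧ p * v ∈ T := fun v hv =>
    ⟨Submodule.mem_sup_left hv, Submodule.mem_sup_right (Submodule.mem_map_of_mem hv)⟩
  have hone : (α ^ 2 - 1) • (1 : ℍ[ℝ]) = p * r + α • s := by
    simp only [r, s, mul_sub, mul_smul_comm, hpp]
    match_scalars <;> ring
  have hqsmul : (α ^ 2 - 1) • q = p * s - α • r := by
    simp only [r, s, mul_add, mul_smul_comm, ← mul_assoc, hpp, neg_one_mul, mul_one]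
    match_scalars <;> ring
  refine eq_top_of_orthogonal_span_one_pair_le le_sup_left ?_ ?_
  · rw [← Submodule.smul_mem_iff T hα, hone]
    exact T.add_mem (hmem r hr).2 (T.smul_mem _ (hmem s hs).1)
  · rw [← Submodule.smul_mem_iff T hα, hqsmul]
    exact T.sub_mem (hmem s hs).2 (T.smul_mem _ (hmem r hr).1)

theorem Submodule.single_apply_mem_of_forall_ne {ι R M : Type*} [Fintype ι] [DecidableEq ι]
    [Ring R] [AddCommGroup M] [Module R M] {S : Submodule R (ι → M)} {i : ι}
    (h : ∀ j ≠ i, ∀ c : M, Pi.single j c ∈ S) {z : ι → M} (hz : z ∈ S) :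
    Pi.single i (z i) ∈ S := by
  have hsplit : Pi.single i (z i) = z - ∑ j ∈ Finset.univ.erase i, Pi.single j (z j) := by
    rw [eq_sub_iff_add_eq, Finset.add_sum_erase _ (fun j => Pi.single j (z j)) (Finset.mem_univ i),
      Finset.univ_sum_single]
  rw [hsplit]
  exact S.sub_mem hz (S.sum_mem fun j hj => h j (Finset.ne_of_mem_erase hj) (z j))

theorem mulLeftLM_single {n : ℕ} (p : ℍ[ℝ]) (i : Fin n) (v : ℍ[ℝ]) :
    mulLeftLM n p (Pi.single i v) = Pi.single i (p * v) := by
  ext j : 1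
  by_cases h : j = i
  · subst h; simp [mulLeftLM]
  · simp [mulLeftLM, h]

theorem mem_orthQ_iff {n : ℕ} {U : Submodule ℝ (Fin n → ℍ[ℝ])} {y : Fin n → ℍ[ℝ]} :
    y ∈ orthQ n U ↔ ∀ x ∈ U, ∑ i, inner ℝ (x i) (y i) = 0 :=
  Iff.rfl

theorem mem_orthQ_span {n : ℕ} {s : Set (Fin n → ℍ[ℝ])} {y : Fin n → ℍ[ℝ]}
    (h : ∀ x ∈ s, ∑ i, inner ℝ (x i) (y i) = 0) : y ∈ orthQ n (Submodule.span ℝ s) := by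
  rw [mem_orthQ_iff]
  intro x hx
  induction hx using Submodule.span_induction with
  | mem x hx => exact h x hx
  | zero => simp
  | add x z _ _ hx hz =>
    simp only [Pi.add_apply, inner_add_left, Finset.sum_add_distrib, hx, hz, add_zero]
  | smul a x _ hx =>
    simp only [Pi.smul_apply, real_inner_smul_left, ← Finset.mul_sum, hx, mul_zero]

theorem sum_inner_single {n : ℕ} (i : Fin n) (c : ℍ[ℝ]) (y : Fin n → ℍ[ℝ]) :
    ∑ j, inner ℝ ((Pi.single i c : Fin n → ℍ[ℝ]) j) (y j) = inner ℝ c (y i) := by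
  rw [Fintype.sum_eq_single i fun j hj => by simp [hj], Pi.single_eq_same]

section UkSub

variable {k : ℕ} {q : Fin (k + 1) → ℍ[ℝ]}

theorem mem_orthQ_UkSub {y : Fin (k + 1) → ℍ[ℝ]} (hre : ∀ i, (y i).re = 0)
    (hq : ∀ j : Fin k,
      inner ℝ (q j.castSucc) (y j.castSucc) + inner ℝ (q j.succ) (y j.succ) = 0) :
    y ∈ orthQ (k + 1) (UkSub k q) := by
  apply mem_orthQ_span
  rintro x (⟨i, rfl⟩ | ⟨j, rfl⟩)
  · rw [sum_inner_single, inner_def, one_mul, re_star, hre i]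
  · simp only [Pi.add_apply, inner_add_left, Finset.sum_add_distrib, sum_inner_single, hq j]

theorem single_mem_orthQ_UkSub {i : Fin (k + 1)} {v : ℍ[ℝ]}
    (hv : v ∈ (Submodule.span ℝ {1, q i})ᗮ) :
    Pi.single i v ∈ orthQ (k + 1) (UkSub k q) := by
  rw [mem_orthogonal_span_one_pair_iff] at hv
  have hinner : ∀ j, inner ℝ (q j) ((Pi.single i v : Fin (k + 1) → ℍ[ℝ]) j) = 0 := by
    intro j
    by_cases h : j = i
    · subst h; simpa using hv.2
    · simp [h]
  refine mem_orthQ_UkSub (fun j => ?_) fun j => by rw [hinner, hinner, add_zero]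
  by_cases h : j = i
  · subst h; simpa using hv.1
  · simp [h]

theorem alternating_mem_orthQ_UkSub (hq : ∀ i, q i ^ 2 = -1) :
    (fun i : Fin (k + 1) => (-1 : ℝ) ^ (i : ℕ) • q i) ∈ orthQ (k + 1) (UkSub k q) := by
  have hunit := fun i => re_eq_zero_and_norm_eq_one_of_sq_eq_neg_one (hq i)
  refine mem_orthQ_UkSub (fun i => by simp [(hunit i).1]) fun j => ?_
  simp only [real_inner_smul_right, real_inner_self_eq_norm_sq, (hunit _).2, Fin.val_castSucc,
    Fin.val_succ, pow_succ]
  ring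

variable {p : ℍ[ℝ]}

theorem comap_single_sup_map_eq_top_of_ne (hp : p ^ 2 = -1) {i : Fin (k + 1)}
    (hqi : q i ^ 2 = -1) (hpq : p ≠ q i) (hpq' : p ≠ -q i) :
    (orthQ (k + 1) (UkSub k q) ⊔ (orthQ (k + 1) (UkSub k q)).map (mulLeftLM (k + 1) p)).comap
      (LinearMap.single ℝ (fun _ => ℍ[ℝ]) i) = ⊤ := by
  refine eq_top_mono (sup_le (fun v hv => ?_) ?_)
    (orthogonal_span_one_pair_sup_map_mulLeft_eq_top hp hqi hpq hpq')
  · exact Submodule.mem_sup_left (single_mem_orthQ_UkSub hv)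
  · rintro _ ⟨v, hv, rfl⟩
    refine Submodule.mem_sup_right ⟨_, single_mem_orthQ_UkSub hv, ?_⟩
    simp [mulLeftLM_single]

theorem comap_single_sup_map_eq_top_of_eq (hq : ∀ i, q i ^ 2 = -1) {i : Fin (k + 1)}
    (hpq : p = q i ∨ p = -q i)
    (hother : ∀ j ≠ i,
      (orthQ (k + 1) (UkSub k q) ⊔ (orthQ (k + 1) (UkSub k q)).map (mulLeftLM (k + 1) p)).comap
        (LinearMap.single ℝ (fun _ => ℍ[ℝ]) j) = ⊤) :
    (orthQ (k + 1) (UkSub k q) ⊔ (orthQ (k + 1) (UkSub k q)).map (mulLeftLM (k + 1) p)).comap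
      (LinearMap.single ℝ (fun _ => ℍ[ℝ]) i) = ⊤ := by
  set V := orthQ (k + 1) (UkSub k q)
  set S := V ⊔ V.map (mulLeftLM (k + 1) p)
  set T := S.comap (LinearMap.single ℝ (fun _ => ℍ[ℝ]) i)
  have hextract : ∀ z ∈ S, z i ∈ T := fun z hz =>
    Submodule.single_apply_mem_of_forall_ne
      (fun j hj c => (Submodule.eq_top_iff'.mp (hother j hj)) c) hz
  have hw := alternating_mem_orthQ_UkSub hq
  have hsign : (-1 : ℝ) ^ (i : ℕ) ≠ 0 := pow_ne_zero _ (by norm_num)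
  have hqT : q i ∈ T := (T.smul_mem_iff hsign).mp (hextract _ (Submodule.mem_sup_left hw))
  have hpqT : p * q i ∈ T := by
    rw [← T.smul_mem_iff hsign, ← mul_smul_comm]
    exact hextract _ (Submodule.mem_sup_right (Submodule.mem_map_of_mem hw))
  have h1 : (1 : ℍ[ℝ]) ∈ T := by
    rcases hpq with rfl | rfl
    · rw [← sq, hq i] at hpqT; exact T.neg_mem_iff.mp hpqT
    · rwa [neg_mul, ← sq, hq i, neg_neg] at hpqT
  refine eq_top_of_orthogonal_span_one_pair_le (fun v hv => ?_) h1 hqT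
  exact Submodule.mem_sup_left (single_mem_orthQ_UkSub hv)

end UkSub

theorem stmt14_general (k : ℕ) (q : Fin (k + 1) → Quaternion ℝ)
    (hq : ∀ i, q i ^ 2 = -1)
    (hq' : ∀ i j, i ≠ j → q i ≠ q j ∧ q i ≠ -q j)
    (p : Quaternion ℝ) (hp : p ^ 2 = -1) :
    orthQ (k + 1) (UkSub k q) ⊔ (orthQ (k + 1) (UkSub k q)).map (mulLeftLM (k + 1) p) = ⊤ := by
  rw [eq_top_iff, ← LinearMap.iSup_range_single]
  refine iSup_le fun i => LinearMap.range_le_iff_comap.mpr ?_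
  by_cases hpq : p = q i ∨ p = -q i
  · refine comap_single_sup_map_eq_top_of_eq hq hpq fun j hj => ?_
    obtain ⟨hji, hji'⟩ := hq' j i hj
    refine comap_single_sup_map_eq_top_of_ne hp (hq j) ?_ ?_ <;> grind
  · rw [not_or] at hpq
    exact comap_single_sup_map_eq_top_of_ne hp (hq i) hpq.1 hpq.2

/-- For `k ≥ 1` and unit imaginary quaternions `q₁, …, q_{k+1}` with `q_i ≠ ±q_j`
(`i ≠ j`), the dual of the pair `(U_k, ℍ^{k+1})` is given by a CR quaternionic vector
space: `U_k^⊥ + p•(U_k^⊥) = ℍ^{k+1}` for every unit imaginary quaternion `p`. -/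
theorem stmt14 (k : ℕ) (hk : 1 ≤ k) (q : Fin (k + 1) → Quaternion ℝ)
    (hq : ∀ i, q i ^ 2 = -1)
    (hq' : ∀ i j, i ≠ j → q i ≠ q j ∧ q i ≠ -q j)
    (p : Quaternion ℝ) (hp : p ^ 2 = -1) :
    orthQ (k + 1) (UkSub k q) ⊔ (orthQ (k + 1) (UkSub k q)).map (mulLeftLM (k + 1) p) = ⊤ :=
  stmt14_general k q hq hq' p hp
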